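/- arXiv:2105.01864 — 3 statements merged into one kernel-verified Lean document; each statement's English description precedes it below -/
import Mathlib

section
/- Suppose nonnegative reals n_1, …, n_m and a nonincreasing sequence of nonnegative integers t_1 ≥ t_2 ≥ … ≥ t_m with t_i distinct (t_i strictly decreasing), satisfy n_1 + … + n_i ≤ n / 2^(t_i + 1) for all i, where t_m ≥ 0. Then ∑_{i=1}^m n_i · t_i ≤ n · ∑_{j=0}^{∞} j / 2^(j+1) ≤ n. -/
/-!
Layer-cake decomposition: `∑ i, a i * t i = ∑ k, ∑ {i | k < t i}, a i`. As `t` is antitone,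
`{i | k < t i}` is an initial segment `{i | i ≤ i₀}` with `t i₀ ≥ k + 1`, so its sum is at most
`n / 2 ^ (k + 2)`; summing over `k` gives at most `n / 2`, while `∑' j, j / 2 ^ (j + 1) = 1`.
-/

open Finset

theorem sum_mul_natCast_eq_sum_range_sum_filter_lt {ι R : Type*} [CommSemiring R]
    (s : Finset ι) (a : ι → R) (t : ι → ℕ) {N : ℕ} (hN : ∀ i ∈ s, t i ≤ N) :
    ∑ i ∈ s, a i * t i = ∑ j ∈ range N, ∑ i ∈ s with j < t i, a i := by
  have hrange : ∀ i ∈ s, {j ∈ range N | j < t i} = range (t i) := by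
    intro i hi
    ext j
    simp only [mem_filter, mem_range]
    have := hN i hi
    omega
  simp_rw [sum_filter]
  rw [sum_comm]
  refine sum_congr rfl fun i hi => ?_
  rw [← sum_filter, sum_const, hrange i hi, card_range, nsmul_eq_mul, mul_comm]

theorem sum_filter_lt_le_of_sum_Iic_le {ι : Type*} [Fintype ι] [LinearOrder ι]
    {a : ι → ℝ} {t : ι → ℕ} {n : ℝ} (hn : 0 ≤ n) (ht : Antitone t)
    (hpre : ∀ i, ∑ j ∈ univ.filter (· ≤ i), a j ≤ n / 2 ^ (t i + 1)) (k : ℕ) :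
    ∑ i with k < t i, a i ≤ n / 2 ^ (k + 2) := by
  rcases (univ.filter (k < t ·)).eq_empty_or_nonempty with hempty | hne
  · rw [hempty, sum_empty]; positivity
  set i₀ := (univ.filter (k < t ·)).max' hne
  have hi₀ : k < t i₀ := (mem_filter.1 (max'_mem _ hne)).2
  have hprefix : univ.filter (k < t ·) = univ.filter (· ≤ i₀) := by
    ext i
    simp only [mem_filter, mem_univ, true_and]
    exact ⟨fun hi => le_max' _ i (by simpa using hi), fun hi => hi₀.trans_le (ht hi)⟩
  calc ∑ i with k < t i, a i = ∑ i ∈ univ.filter (· ≤ i₀), a i := by rw [hprefix]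
    _ ≤ n / 2 ^ (t i₀ + 1) := hpre i₀
    _ ≤ n / 2 ^ (k + 2) :=
        div_le_div_of_nonneg_left hn (by positivity) (pow_le_pow_right₀ one_le_two (by omega))

theorem sum_range_div_two_pow_add_two_le {n : ℝ} (hn : 0 ≤ n) (N : ℕ) :
    ∑ j ∈ range N, n / 2 ^ (j + 2) ≤ n / 2 := by
  calc ∑ j ∈ range N, n / 2 ^ (j + 2) = n / 4 * ∑ j ∈ range N, (1 / 2 : ℝ) ^ j := by
        rw [mul_sum]
        refine sum_congr rfl fun j _ => ?_
        rw [pow_add, one_div_pow]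
        field_simp
        norm_num
    _ ≤ n / 4 * 2 := by gcongr; exact sum_geometric_two_le N
    _ = n / 2 := by ring

theorem tsum_natCast_div_two_pow_succ : ∑' j : ℕ, (j : ℝ) / 2 ^ (j + 1) = 1 := by
  have hterm : ∀ j : ℕ, (j : ℝ) / 2 ^ (j + 1) = j * (1 / 2) ^ j / 2 := by
    intro j; rw [pow_succ, one_div_pow]; field_simp
  rw [tsum_congr hterm, tsum_div_const, tsum_coe_mul_geometric_of_norm_lt_one (by norm_num)]
  norm_num

theorem stmt_14_general (m : ℕ) (n : ℝ) (hn : 0 ≤ n)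
    (a : Fin m → ℝ) (t : Fin m → ℕ)
    (ht : StrictAnti t)
    (hpre : ∀ i : Fin m, (∑ j ∈ Finset.univ.filter (· ≤ i), a j) ≤ n / 2 ^ (t i + 1)) :
    (∑ i, a i * t i) ≤ n * (∑' j : ℕ, (j : ℝ) / 2 ^ (j + 1)) ∧
      n * (∑' j : ℕ, (j : ℝ) / 2 ^ (j + 1)) ≤ n := by
  rw [tsum_natCast_div_two_pow_succ, mul_one]
  refine ⟨?_, le_rfl⟩
  calc ∑ i, a i * t i = ∑ k ∈ range (univ.sup t), ∑ i with k < t i, a i :=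
        sum_mul_natCast_eq_sum_range_sum_filter_lt _ a t fun i hi => le_sup hi
    _ ≤ ∑ k ∈ range (univ.sup t), n / 2 ^ (k + 2) :=
        sum_le_sum fun k _ => sum_filter_lt_le_of_sum_Iic_le hn ht.antitone hpre k
    _ ≤ n / 2 := sum_range_div_two_pow_add_two_le hn _
    _ ≤ n := by linarith

/-- If nonnegative reals `n_1, …, n_m` and strictly decreasing nonnegative integers
`t_1 > t_2 > … > t_m` satisfy the prefix constraints
`n_1 + … + n_i ≤ n / 2^(t_i + 1)` for all `i`, then
`∑ i, n_i · t_i ≤ n · ∑_{j≥0} j / 2^(j+1) ≤ n`. -/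
theorem stmt_14 (m : ℕ) (n : ℝ) (hn : 0 ≤ n)
    (a : Fin m → ℝ) (t : Fin m → ℕ)
    (ha : ∀ i, 0 ≤ a i)
    (ht : StrictAnti t)
    (hpre : ∀ i : Fin m, (∑ j ∈ Finset.univ.filter (· ≤ i), a j) ≤ n / 2 ^ (t i + 1)) :
    (∑ i, a i * t i) ≤ n * (∑' j : ℕ, (j : ℝ) / 2 ^ (j + 1)) ∧
      n * (∑' j : ℕ, (j : ℝ) / 2 ^ (j + 1)) ≤ n :=
  stmt_14_general m n hn a t ht hpre
end

section
/- Let f_k(n,h) be defined by the recursion f_k(n,h) = ∑_{i=1}^{m} f_{k-1}(n_i, h_{i-1}) + C·n·λ_k(h), where h_i = λ_{k-1}(h_{i-1}), h_0 = h, m = λ_k(h), the n_i satisfy ∑_{j≤i} n_j ≤ n/2^(h_i + 1), and f_1(n,h) ≤ c·n·λ_1(h). Then there exist constants c_1, c_2 (independent of k) such that f_k(n,h) ≤ c_1·n + c_2·n·λ_k(h) for all k ≥ 1; in particular f_k(n,h) = O(n·λ_k(h)) uniformly in k. -/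
/-!
By induction on `k`, `f k n h ≤ D·n·λ_k(h)` with `D = c + 2C`. In the recursion for `f_k`
the `i`-th subproblem has size `n_i ≤ n / 2^(h_i + 1)` and, by the induction hypothesis, costs
at most `D·n_i·λ_{k-1}(h_{i-1}) = D·n_i·h_i ≤ D·n/4`, because `t / 2^(t+1) ≤ 1/4` for `t ≥ 1`.
Summing over the `m = λ_k(h)` subproblems and adding `C·n·m` gives at most
`(D/4 + C)·n·m ≤ D·n·m`.
-/

def A : ℕ → ℕ → ℕ
  | 0, n => 2 ^ n
  | m + 1, 0 => A m 1
  | m + 1, n + 1 => A m (A (m + 1) n)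

/-- Row inverse of the Ackermann function: `λ_k(n) = min {j ≥ 1 : A k j ≥ n}`. -/
noncomputable def lam (k n : ℕ) : ℕ := sInf {j : ℕ | 1 ≤ j ∧ n ≤ A k j}

open Finset

lemma lt_A : ∀ m n, n < A m n
  | 0, n => by simpa [A] using Nat.lt_two_pow_self (n := n)
  | m + 1, 0 => by
    have := lt_A m 1
    simp only [A]; omega
  | m + 1, n + 1 => by
    have h1 := lt_A (m + 1) n
    have h2 := lt_A m (A (m + 1) n)
    rw [A]; omega

lemma one_le_lam (k n : ℕ) : 1 ≤ lam k n := by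
  have hne : {j : ℕ | 1 ≤ j ∧ n ≤ A k j}.Nonempty :=
    ⟨n + 1, by omega, (lt_A k (n + 1)).le.trans' (by omega)⟩
  exact (Nat.sInf_mem hne).1

lemma four_mul_le_two_pow_succ {t : ℕ} (ht : 1 ≤ t) : 4 * t ≤ 2 ^ (t + 1) := by
  obtain ⟨s, rfl⟩ := Nat.exists_eq_add_of_le' ht
  have := Nat.lt_two_pow_self (n := s)
  rw [show s + 1 + 1 = s + 2 by ring, pow_add]
  omega

lemma mul_le_div_four_of_le_div_two_pow {a n : ℝ} {t : ℕ} (hn : 0 ≤ n) (ht : 1 ≤ t)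
    (ha : a ≤ n / 2 ^ (t + 1)) : a * t ≤ n / 4 := by
  have h4 : (4 : ℝ) * t ≤ 2 ^ (t + 1) := mod_cast four_mul_le_two_pow_succ ht
  calc a * t ≤ n / 2 ^ (t + 1) * t := by gcongr
    _ ≤ n / 4 := by
      rw [div_mul_eq_mul_div, div_le_div_iff₀ (by positivity) (by norm_num)]
      nlinarith [mul_le_mul_of_nonneg_left h4 hn]

lemma sum_le_of_le_mul_lam {g : ℝ → ℕ → ℝ} {a : ℕ → ℝ} {D n : ℝ} {k h m : ℕ}
    (hD : 0 ≤ D) (hn : 0 ≤ n) (hg : ∀ x, 0 ≤ x → ∀ h, g x h ≤ D * x * lam k h)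
    (ha : ∀ i, 0 ≤ a i)
    (hprefix : ∀ i < m, ∑ j ∈ range (i + 1), a j ≤ n / 2 ^ ((lam k)^[i + 1] h + 1)) :
    ∑ i ∈ range m, g (a i) ((lam k)^[i] h) ≤ m * (D * n / 4) := by
  have hterm : ∀ i ∈ range m, g (a i) ((lam k)^[i] h) ≤ D * n / 4 := by
    intro i hi
    have hai : a i ≤ n / 2 ^ ((lam k)^[i + 1] h + 1) :=
      (single_le_sum (fun j _ => ha j) (self_mem_range_succ i)).trans
        (hprefix i (mem_range.mp hi))
    rw [Function.iterate_succ_apply'] at hai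
    calc g (a i) ((lam k)^[i] h) ≤ D * (a i * lam k ((lam k)^[i] h)) := by
          linarith [hg (a i) (ha i) ((lam k)^[i] h)]
      _ ≤ D * (n / 4) := by
          gcongr; exact mul_le_div_four_of_le_div_two_pow hn (one_le_lam _ _) hai
      _ = D * n / 4 := by ring
  simpa using sum_le_sum hterm

/-- The recursion of the statement: `a i` is the paper's `n_{i+1}` and `(lam (k - 1))^[i] h`
is `h_i`. -/
def CostRecursion (f : ℕ → ℝ → ℕ → ℝ) (C : ℝ) : Prop :=
  ∀ k : ℕ, 2 ≤ k → ∀ (n : ℝ), 0 ≤ n → ∀ h : ℕ, ∃ a : ℕ → ℝ,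
    (∀ i, 0 ≤ a i) ∧
    (∀ i < lam k h,
      (∑ j ∈ range (i + 1), a j) ≤ n / 2 ^ ((lam (k - 1))^[i + 1] h + 1)) ∧
    f k n h =
      (∑ i ∈ range (lam k h), f (k - 1) (a i) ((lam (k - 1))^[i] h)) + C * n * lam k h

theorem CostRecursion.le_mul_lam {f : ℕ → ℝ → ℕ → ℝ} {C D : ℝ} (hrec : CostRecursion f C)
    (hD : 0 ≤ D) (hCD : D / 4 + C ≤ D)
    (hbase : ∀ n, 0 ≤ n → ∀ h, f 1 n h ≤ D * n * lam 1 h) :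
    ∀ k, 1 ≤ k → ∀ n, 0 ≤ n → ∀ h, f k n h ≤ D * n * lam k h := by
  intro k hk
  induction k, hk using Nat.le_induction with
  | base => exact hbase
  | succ k hk ih =>
    intro n hn h
    obtain ⟨a, ha, hprefix, heq⟩ := hrec (k + 1) (by omega) n hn h
    simp only [Nat.add_sub_cancel] at heq hprefix
    have hsum := sum_le_of_le_mul_lam hD hn ih ha hprefix
    have hnm : 0 ≤ n * lam (k + 1) h := by positivity
    rw [heq]
    nlinarith

/-- Theorem 2 of the paper: if `f 1 n h ≤ c·n·λ_1(h)` and for `k ≥ 2` the cost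
satisfies the recursion `f k n h = ∑_{i=1}^{m} f (k-1) (n_i) (h_{i-1}) + C·n·λ_k(h)`
with `m = λ_k(h)`, `h_i = λ_{k-1}^{(i)}(h)` and prefix constraints
`n_1 + … + n_i ≤ n / 2^(h_i + 1)`, then there are constants `c₁, c₂` independent of
`k` with `f k n h ≤ c₁·n + c₂·n·λ_k(h)` for all `k ≥ 1`, i.e. `f_k(n,h) = O(n·λ_k(h))`
uniformly in `k`. -/
theorem stmt_15 (f : ℕ → ℝ → ℕ → ℝ) (c C : ℝ) (hc : 0 ≤ c) (hC : 0 ≤ C)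
    (hbase : ∀ (n : ℝ), 0 ≤ n → ∀ h : ℕ, f 1 n h ≤ c * n * lam 1 h)
    (hrec : ∀ k : ℕ, 2 ≤ k → ∀ (n : ℝ), 0 ≤ n → ∀ h : ℕ, ∃ a : ℕ → ℝ,
      (∀ i, 0 ≤ a i) ∧
      (∀ i < lam k h,
        (∑ j ∈ Finset.range (i + 1), a j) ≤ n / 2 ^ ((lam (k - 1))^[i + 1] h + 1)) ∧
      f k n h =
        (∑ i ∈ Finset.range (lam k h), f (k - 1) (a i) ((lam (k - 1))^[i] h)) +
          C * n * lam k h) :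
    ∃ c₁ c₂ : ℝ, ∀ k : ℕ, 1 ≤ k → ∀ (n : ℝ), 0 ≤ n → ∀ h : ℕ,
      f k n h ≤ c₁ * n + c₂ * n * lam k h := by
  have hbase' : ∀ n, 0 ≤ n → ∀ h, f 1 n h ≤ (c + 2 * C) * n * lam 1 h := by
    intro n hn h
    have : 0 ≤ C * n * lam 1 h := by positivity
    linarith [hbase n hn h]
  refine ⟨0, c + 2 * C, fun k hk n hn h => ?_⟩
  simpa using CostRecursion.le_mul_lam hrec (by positivity) (by linarith) hbase' k hk n hn h
end

section
/- In a connected graph where every node marks one incident edge, after repeatedly unmarking the middle edge of any path of length 3 formed by marked edges until none remains, every connected component of the marked subgraph has diameter at most 2, and every node is still incident to at least one marked edge; hence if additionally every node has degree at most c, every such component has at most c+1 nodes. -/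
/-- One unmarking step: the middle edge `(a,b)` of some path `u–a–b–t` of length 3
formed by marked edges is unmarked. -/
def UnmarkStep {V : Type*} (M M' : SimpleGraph V) : Prop :=
  ∃ u a b t : V, M.Adj u a ∧ M.Adj a b ∧ M.Adj b t ∧
    u ≠ b ∧ a ≠ t ∧ u ≠ t ∧ M' = M.deleteEdges {s(a, b)}

private lemma length_drop' {V : Type*} {G : SimpleGraph V} {u v : V}
    (p : G.Walk u v) (n : ℕ) : (p.drop n).length = p.length - n := by
  induction p generalizing n with
  | nil => cases n <;> simp [SimpleGraph.Walk.drop]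
  | cons h q ih =>
    cases n with
    | zero => simp [SimpleGraph.Walk.drop]
    | succ n => simp [SimpleGraph.Walk.drop, ih]

private lemma step_le {V : Type*} {M M' : SimpleGraph V} (h : UnmarkStep M M') : M' ≤ M := by
  obtain ⟨u, a, b, t, _, _, _, _, _, _, rfl⟩ := h
  exact SimpleGraph.deleteEdges_le _

private lemma step_cov {V : Type*} {M M' : SimpleGraph V} (h : UnmarkStep M M')
    (hcov : ∀ v, ∃ u, M.Adj v u) : ∀ v, ∃ u, M'.Adj v u := by
  obtain ⟨u, a, b, t, hua, hab, hbt, hub, hat, hut, rfl⟩ := h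
  intro v
  by_cases hva : v = a
  · subst hva
    refine ⟨u, ?_⟩
    simp only [SimpleGraph.deleteEdges_adj, Set.mem_singleton_iff]
    refine ⟨hua.symm, ?_⟩
    rw [Sym2.eq_iff]
    rintro (⟨-, rfl⟩ | ⟨h1, -⟩)
    · exact hub rfl
    · exact hab.ne h1
  · by_cases hvb : v = b
    · subst hvb
      refine ⟨t, ?_⟩
      simp only [SimpleGraph.deleteEdges_adj, Set.mem_singleton_iff]
      refine ⟨hbt, ?_⟩
      rw [Sym2.eq_iff]
      rintro (⟨h1, -⟩ | ⟨-, h2⟩)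
      · exact hab.ne' h1
      · exact hat h2.symm
    · obtain ⟨w, hw⟩ := hcov v
      refine ⟨w, ?_⟩
      simp only [SimpleGraph.deleteEdges_adj, Set.mem_singleton_iff]
      refine ⟨hw, ?_⟩
      rw [Sym2.eq_iff]
      rintro (⟨h1, -⟩ | ⟨h2, -⟩)
      · exact hva h1
      · exact hvb h2

private lemma steps_le {V : Type*} {A B : SimpleGraph V}
    (h : Relation.ReflTransGen UnmarkStep A B) : B ≤ A := by
  induction h with
  | refl => exact le_refl _
  | tail _ hstep ih => exact le_trans (step_le hstep) ih

private lemma steps_cov {V : Type*} {A B : SimpleGraph V}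
    (h : Relation.ReflTransGen UnmarkStep A B) (hcov : ∀ v, ∃ u, A.Adj v u) :
    ∀ v, ∃ u, B.Adj v u := by
  induction h with
  | refl => exact hcov
  | tail _ hstep ih => exact step_cov hstep ih

private lemma dist_eq_one {V : Type*} {M : SimpleGraph V} {u v : V}
    (h : M.dist u v = 1) : M.Adj u v := by
  have hr : M.Reachable u v := SimpleGraph.Reachable.of_dist_ne_zero (by omega)
  obtain ⟨p, hp⟩ := hr.exists_walk_length_eq_dist
  rw [h] at hp
  have h0 : M.Adj (p.getVert 0) (p.getVert 1) := p.adj_getVert_succ (by omega)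
  rw [SimpleGraph.Walk.getVert_zero] at h0
  have h1 : p.getVert 1 = v := by
    have := p.getVert_length
    rw [hp] at this
    exact this
  rwa [h1] at h0

private lemma dist_eq_two {V : Type*} {M : SimpleGraph V} {u v : V}
    (h : M.dist u v = 2) : ∃ m, M.Adj u m ∧ M.Adj m v := by
  have hr : M.Reachable u v := SimpleGraph.Reachable.of_dist_ne_zero (by omega)
  obtain ⟨p, hp⟩ := hr.exists_walk_length_eq_dist
  rw [h] at hp
  have h0 : M.Adj (p.getVert 0) (p.getVert 1) := p.adj_getVert_succ (by omega)
  have h1 : M.Adj (p.getVert 1) (p.getVert 2) := p.adj_getVert_succ (by omega)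
  rw [SimpleGraph.Walk.getVert_zero] at h0
  have h2 : p.getVert 2 = v := by
    have := p.getVert_length
    rw [hp] at this
    exact this
  rw [h2] at h1
  exact ⟨p.getVert 1, h0, h1⟩

/-- Start from a marking `M₀ ≤ G` in which every node is incident to at least one
marked edge, and repeatedly unmark the middle edge of a marked path of length 3
until none remains, reaching `M`. Then every connected component of the marked
subgraph `M` has diameter at most 2, every node is still incident to at least one
marked edge, and hence if every node of `G` has degree at most `c`, each component
of `M` has at most `c + 1` nodes. -/
theorem stmt_19 {V : Type*} [Fintype V] [DecidableEq V]
    (G M₀ M : SimpleGraph V) [DecidableRel G.Adj]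
    (hconn : G.Connected) (hle : M₀ ≤ G)
    (hcov₀ : ∀ v, ∃ u, M₀.Adj v u)
    (hsteps : Relation.ReflTransGen UnmarkStep M₀ M)
    (hterm : ∀ u a b t : V, M.Adj u a → M.Adj a b → M.Adj b t →
      u = b ∨ a = t ∨ u = t) :
    (∀ u v, M.Reachable u v → M.dist u v ≤ 2) ∧
      (∀ v, ∃ u, M.Adj v u) ∧
      ∀ c : ℕ, (∀ v, G.degree v ≤ c) →
        ∀ v, Set.ncard {u | M.Reachable v u} ≤ c + 1 := by
  -- M ≤ G
  have hMle : M ≤ G := le_trans (steps_le hsteps) hle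
  -- coverage
  have hcov : ∀ v, ∃ u, M.Adj v u := steps_cov hsteps hcov₀
  -- diameter ≤ 2
  have hdiam : ∀ u v, M.Reachable u v → M.dist u v ≤ 2 := by
    intro u v hr
    by_contra hlt
    push_neg at hlt
    obtain ⟨p, hp⟩ := hr.exists_walk_length_eq_dist
    have h3 : 3 ≤ p.length := by omega
    have h0 : M.Adj u (p.getVert 1) := by
      have := p.adj_getVert_succ (show 0 < p.length by omega)
      rwa [SimpleGraph.Walk.getVert_zero] at this
    have h1 : M.Adj (p.getVert 1) (p.getVert 2) := p.adj_getVert_succ (by omega)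
    have h2 : M.Adj (p.getVert 2) (p.getVert 3) := p.adj_getVert_succ (by omega)
    rcases hterm u (p.getVert 1) (p.getVert 2) (p.getVert 3) h0 h1 h2 with hc | hc | hc
    · have := M.dist_le ((p.drop 2).copy hc.symm rfl)
      rw [SimpleGraph.Walk.length_copy, length_drop'] at this
      omega
    · have := M.dist_le (SimpleGraph.Walk.cons h0 ((p.drop 3).copy hc.symm rfl))
      rw [SimpleGraph.Walk.length_cons, SimpleGraph.Walk.length_copy, length_drop'] at this
      omega
    · have := M.dist_le ((p.drop 3).copy hc.symm rfl)
      rw [SimpleGraph.Walk.length_copy, length_drop'] at this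
      omega
  refine ⟨hdiam, hcov, ?_⟩
  intro c hdeg v
  obtain ⟨w, hw⟩ := hcov v
  -- there is a center x
  have hcenter : ∃ x, ∀ u, M.Reachable v u → u = x ∨ M.Adj x u := by
    by_cases hall : ∀ u, M.Reachable v u → u = v ∨ M.Adj v u
    · exact ⟨v, hall⟩
    · push_neg at hall
      obtain ⟨u₀, hru₀, hu₀v, hnadj⟩ := hall
      have hd2 : M.dist v u₀ = 2 := by
        have hle2 : M.dist v u₀ ≤ 2 := hdiam v u₀ hru₀
        have hne0 : M.dist v u₀ ≠ 0 := by
          intro h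
          exact hu₀v (hru₀.dist_eq_zero_iff.mp h).symm
        have hne1 : M.dist v u₀ ≠ 1 := fun h => hnadj (dist_eq_one h)
        omega
      obtain ⟨m, hvm, hmu₀⟩ := dist_eq_two hd2
      have huniq : ∀ w', M.Adj v w' → w' = m := by
        intro w' hw'
        rcases hterm u₀ m v w' hmu₀.symm hvm.symm hw' with hc | hc | hc
        · exact absurd hc hu₀v
        · exact hc.symm
        · exact absurd (hc ▸ hw') hnadj
      refine ⟨m, fun u hru => ?_⟩
      have hle2 : M.dist v u ≤ 2 := hdiam v u hru
      rcases Nat.lt_or_ge (M.dist v u) 1 with h | h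
      · have : u = v := (hru.dist_eq_zero_iff.mp (by omega)).symm
        subst this
        exact Or.inr hvm.symm
      · rcases Nat.lt_or_ge (M.dist v u) 2 with h' | h'
        · have hd : M.dist v u = 1 := by omega
          have hadj : M.Adj v u := dist_eq_one hd
          exact Or.inl (huniq u hadj)
        · have hd : M.dist v u = 2 := by omega
          obtain ⟨m', hvm', hm'u⟩ := dist_eq_two hd
          have : m' = m := huniq m' hvm'
          subst this
          exact Or.inr hm'u
  obtain ⟨x, hx⟩ := hcenter
  have hsub : {u | M.Reachable v u} ⊆ insert x (G.neighborSet x) := by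
    intro u hu
    rcases hx u hu with rfl | hadj
    · exact Set.mem_insert _ _
    · exact Set.mem_insert_of_mem _ (hMle hadj)
  calc Set.ncard {u | M.Reachable v u}
      ≤ Set.ncard (insert x (G.neighborSet x)) :=
        Set.ncard_le_ncard hsub (Set.toFinite _)
    _ ≤ Set.ncard (G.neighborSet x) + 1 := Set.ncard_insert_le _ _
    _ ≤ c + 1 := by
        have : Set.ncard (G.neighborSet x) = G.degree x := by
          rw [← SimpleGraph.card_neighborSet_eq_degree,
            Set.ncard_eq_toFinset_card', Set.toFinset_card]
        rw [this]
        exact Nat.add_le_add_right (hdeg x) 1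
end
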